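/- arXiv:1506.02824 — 2 statements merged into one kernel-verified Lean document; each statement's English description precedes it below -/
import Mathlib

section
/- There exist a finite set U, a block size S, and an objective function f on partitions of U such that the minimum of f over threshold blockings of size S is strictly less than the minimum over fixed-sized blockings of size S. Concretely, for U with six units having binary covariate values x = (1,1,1,0,0,0), S = 2, and f(B) the block-size-weighted average within-block Euclidean distance f(B) = Σ_{b∈B} (n_b/n) · (1/n_b²) Σ_{i,j∈b} |x_i − x_j|, the optimal threshold blocking {{1,1,1},{0,0,0}} achieves f = 0 while every fixed-sized blocking of size 2 has f ≥ 1/6. -/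
/-!
A fixed-sized blocking of size 2 pairs the three units with covariate 1 among the six units, so
by parity some pair mixes a 1 with a 0. That pair contributes `|1 - 0| / 6` to the objective,
while the threshold blocking into the two covariate classes has no within-block distance at all.
-/

open Finset

namespace Finpartition

variable {α : Type*} [DecidableEq α] {s : Finset α}

lemma sum_card_filter_parts (P : Finpartition s) (p : α → Prop) [DecidablePred p] :
    ∑ b ∈ P.parts, #(b.filter p) = #(s.filter p) := by
  conv_rhs => rw [← P.biUnion_parts, filter_biUnion]
  rw [card_biUnion]
  · rfl
  · exact fun b hb c hc hbc => disjoint_filter_filter (P.disjoint hb hc hbc)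

lemma exists_odd_card_filter_part (P : Finpartition s) (p : α → Prop) [DecidablePred p]
    (hodd : Odd #(s.filter p)) : ∃ b ∈ P.parts, Odd #(b.filter p) := by
  by_contra! heven
  simp only [Nat.not_odd_iff_even] at heven
  rw [← P.sum_card_filter_parts p, ← Nat.not_even_iff_odd] at hodd
  exact hodd (even_sum _ heven)

end Finpartition

lemma exists_eq_pair_of_odd_card_filter {α : Type*} [DecidableEq α] {b : Finset α}
    (p : α → Prop) [DecidablePred p] (hb : #b = 2) (hodd : Odd #(b.filter p)) :
    ∃ i j, i ≠ j ∧ b = {i, j} ∧ p i ∧ ¬ p j := by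
  obtain ⟨i, j, hij, rfl⟩ := card_eq_two.mp hb
  have hji : i ∉ ({j} : Finset α) := by simpa using hij
  by_cases hi : p i <;> by_cases hj : p j
  · simp [filter_insert, filter_singleton, hi, hj, card_insert_of_notMem hji, Nat.odd_iff] at hodd
  · exact ⟨i, j, hij, rfl, hi, hj⟩
  · exact ⟨j, i, hij.symm, pair_comm i j, hj, hi⟩
  · simp [filter_insert, filter_singleton, hi, hj] at hodd

section Objective

variable {α : Type*} (x : α → ℝ) (n : ℝ)

noncomputable def blockCost (b : Finset α) : ℝ :=
  ((#b : ℝ) / n) * ((1 : ℝ) / (#b : ℝ) ^ 2) * ∑ i ∈ b, ∑ j ∈ b, |x i - x j|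

lemma blockCost_nonneg (hn : 0 ≤ n) (b : Finset α) : 0 ≤ blockCost x n b := by
  unfold blockCost
  have : 0 ≤ ∑ i ∈ b, ∑ j ∈ b, |x i - x j| :=
    sum_nonneg fun _ _ => sum_nonneg fun _ _ => abs_nonneg _
  positivity

lemma blockCost_eq_zero_of_const {b : Finset α} {v : ℝ} (hb : ∀ i ∈ b, x i = v) :
    blockCost x n b = 0 := by
  have : ∑ i ∈ b, ∑ j ∈ b, |x i - x j| = 0 :=
    sum_eq_zero fun i hi => sum_eq_zero fun j hj => by simp [hb i hi, hb j hj]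
  simp [blockCost, this]

lemma blockCost_pair [DecidableEq α] {i j : α} (hij : i ≠ j) :
    blockCost x n {i, j} = |x i - x j| / n := by
  simp only [blockCost, card_pair hij, sum_pair hij, sub_self, abs_zero, abs_sub_comm (x j)]
  push_cast
  ring

end Objective

/-- In the six-unit example with binary covariates `x = (1,1,1,0,0,0)` and block size
requirement `S = 2`, using the block-size-weighted average within-block Euclidean
distance as objective, the threshold blocking `{{1,1,1},{0,0,0}}` achieves the value `0`
while every fixed-sized blocking of size 2 has objective at least `1/6`.  In particular
the minimum over threshold blockings is strictly smaller than over fixed-sized ones. -/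
theorem threshold_strictly_better_example :
    let x : Fin 6 → ℝ := fun i => if (i : ℕ) < 3 then 1 else 0
    let f : Finpartition (Finset.univ : Finset (Fin 6)) → ℝ := fun P =>
      ∑ b ∈ P.parts, ((b.card : ℝ) / 6) * ((1 : ℝ) / (b.card : ℝ) ^ 2) *
        ∑ i ∈ b, ∑ j ∈ b, |x i - x j|
    ∃ P : Finpartition (Finset.univ : Finset (Fin 6)),
      P.parts = {({0, 1, 2} : Finset (Fin 6)), ({3, 4, 5} : Finset (Fin 6))} ∧
      (∀ b ∈ P.parts, 2 ≤ b.card) ∧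
      f P = 0 ∧
      ∀ Q : Finpartition (Finset.univ : Finset (Fin 6)),
        (∀ b ∈ Q.parts, b.card = 2) → 1 / 6 ≤ f Q := by
  intro x f
  have hf : ∀ Q, f Q = ∑ b ∈ Q.parts, blockCost x 6 b := fun _ => rfl
  have hne : ({0, 1, 2} : Finset (Fin 6)) ≠ {3, 4, 5} := by decide
  refine ⟨⟨{{0, 1, 2}, {3, 4, 5}}, (supIndep_pair hne).mpr (by decide), by decide, by decide⟩,
    rfl, by simp, ?_, fun Q hQ => ?_⟩
  · rw [hf, sum_pair hne, blockCost_eq_zero_of_const x 6 (v := 1) (by simp [x]),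
      blockCost_eq_zero_of_const x 6 (v := 0) (by simp [x]), add_zero]
  · obtain ⟨b, hbQ, hodd⟩ :=
      Q.exists_odd_card_filter_part (fun i : Fin 6 => (i : ℕ) < 3) (by decide)
    obtain ⟨i, j, hij, rfl, hi, hj⟩ := exists_eq_pair_of_odd_card_filter _ (hQ b hbQ) hodd
    calc (1 : ℝ) / 6 = blockCost x 6 {i, j} := by
          rw [blockCost_pair x 6 hij]; simp [x, hi, hj]
      _ ≤ f Q := hf Q ▸ single_le_sum (fun b _ => blockCost_nonneg x 6 (by norm_num) b) hbQ
end

section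
/- Under balanced block randomization within a block b of size m ≥ 2 (T treated with T = ⌊m/2⌋ or ⌈m/2⌉ each w.p. 1/2, and given T a uniform subset of size T is treated), for distinct units i ≠ j in b: E[T_iT_j/T²] = 1/(m(m−1)) − 2/((m−1)(m² − o)) and E[T_i(1−T_j)/(T(m−T))] = 1/(m(m−1)), so their difference equals −2/((m−1)(m² − o)), where o = m mod 2. -/
/-!
Conditionally on `T = k`, the treated set is a uniform `k`-subset, so `i` and `j` are both treated
with probability `k(k-1)/(m(m-1))` and `i` alone with probability `k(m-k)/(m(m-1))`. Dividing by
`T² = k²`, resp. `T(m-T) = k(m-k)`, the second conditional expectation is `1/(m(m-1))` for every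
`k`, while the first is `(1 - 1/k)/(m(m-1))`. Averaging over `k ∈ {⌊m/2⌋, ⌈m/2⌉}` then only
requires `E[1/T] = 2m/(m² - o)`, which follows from `4 ⌊m/2⌋ ⌈m/2⌉ = m² - o`.
-/

open Finset

theorem Nat.choose_sub_mul_descFactorial {n k r : ℕ} (hrk : r ≤ k) :
    (n - r).choose (k - r) * n.descFactorial r = n.choose k * k.descFactorial r := by
  rw [descFactorial_eq_factorial_mul_choose, descFactorial_eq_factorial_mul_choose]
  calc (n - r).choose (k - r) * (r.factorial * n.choose r)
      = r.factorial * (n.choose r * (n - r).choose (k - r)) := by ring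
    _ = r.factorial * (n.choose k * k.choose r) := by rw [choose_mul hrk]
    _ = n.choose k * (r.factorial * k.choose r) := by ring

theorem Finset.card_filter_powersetCard_superset_mul_descFactorial {α : Type*} [DecidableEq α]
    {t u : Finset α} (htu : t ⊆ u) (k : ℕ) :
    #{s ∈ u.powersetCard k | t ⊆ s} * (#u).descFactorial #t =
      (#u).choose k * k.descFactorial #t := by
  rcases le_or_gt #t k with htk | hkt
  · rw [card_filter_powersetCard_subset t u k htu htk, Nat.choose_sub_mul_descFactorial htk]
  · have hempty : {s ∈ u.powersetCard k | t ⊆ s} = ∅ :=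
      filter_false_of_mem fun s hs hts ↦
        (card_le_card hts).not_gt ((mem_powersetCard.mp hs).2 ▸ hkt)
    rw [hempty, (Nat.descFactorial_eq_zero_iff_lt).mpr hkt]
    simp

section UniformSubset

variable {α : Type*} [Fintype α] {k : ℕ} {i j : α}

noncomputable def subsetProb (k : ℕ) (p : Finset α → Prop) [DecidablePred p] : ℝ :=
  #{s ∈ (univ : Finset α).powersetCard k | p s} / #((univ : Finset α).powersetCard k)

theorem inv_card_mul_sum_ite_div (p : Finset α → Prop) [DecidablePred p] (g : ℕ → ℝ) :
    (#((univ : Finset α).powersetCard k) : ℝ)⁻¹ *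
        ∑ s ∈ (univ : Finset α).powersetCard k, (if p s then (1 : ℝ) else 0) / g #s =
      subsetProb k p / g k := by
  have hcard : ∀ s ∈ (univ : Finset α).powersetCard k,
      (if p s then (1 : ℝ) else 0) / g #s = (if p s then 1 else 0) / g k :=
    fun s hs ↦ by rw [(mem_powersetCard.mp hs).2]
  rw [sum_congr rfl hcard, ← sum_div, sum_boole, subsetProb]
  ring

theorem subsetProb_superset [DecidableEq α] (t : Finset α) (hk : k ≤ Fintype.card α) :
    subsetProb k (t ⊆ ·) =
      (k.descFactorial #t : ℝ) / (Fintype.card α).descFactorial #t := by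
  have hcount := card_filter_powersetCard_superset_mul_descFactorial (subset_univ t) k
  rw [card_univ] at hcount
  have hchoose : ((Fintype.card α).choose k : ℝ) ≠ 0 := by
    exact_mod_cast (Nat.choose_pos hk).ne'
  have hdesc : ((Fintype.card α).descFactorial #t : ℝ) ≠ 0 := by
    exact_mod_cast (Nat.descFactorial_pos.mpr (t.card_le_univ)).ne'
  rw [subsetProb, card_powersetCard, card_univ, div_eq_div_iff hchoose hdesc,
    mul_comm (k.descFactorial _ : ℝ)]
  exact_mod_cast hcount

theorem subsetProb_mem [DecidableEq α] (i : α) (hk : k ≤ Fintype.card α) :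
    subsetProb k (i ∈ ·) = k / Fintype.card α := by
  simpa [subsetProb] using subsetProb_superset {i} hk

theorem subsetProb_mem_and_mem [DecidableEq α] (hij : i ≠ j) (hk : k ≤ Fintype.card α) :
    subsetProb k (fun s ↦ i ∈ s ∧ j ∈ s) =
      k * (k - 1) / (Fintype.card α * (Fintype.card α - 1)) := by
  have h := subsetProb_superset {i, j} hk
  rw [card_pair hij, Nat.cast_descFactorial_two, Nat.cast_descFactorial_two] at h
  simpa only [subsetProb, insert_subset_iff, singleton_subset_iff] using h

theorem subsetProb_and_add_subsetProb_and_not (p q : Finset α → Prop) [DecidablePred p]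
    [DecidablePred q] :
    subsetProb k (fun s ↦ p s ∧ q s) + subsetProb k (fun s ↦ p s ∧ ¬ q s) =
      subsetProb k p := by
  have h := card_filter_add_card_filter_not
    (s := {s ∈ (univ : Finset α).powersetCard k | p s}) q
  simp only [filter_filter] at h
  simp only [subsetProb, ← add_div]
  exact_mod_cast congrArg (fun n : ℕ ↦ (n : ℝ) / #((univ : Finset α).powersetCard k)) h

theorem subsetProb_mem_and_not_mem [DecidableEq α] (hij : i ≠ j) (hk : k ≤ Fintype.card α) :
    subsetProb k (fun s ↦ i ∈ s ∧ j ∉ s) =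
      k * (Fintype.card α - k) / (Fintype.card α * (Fintype.card α - 1)) := by
  have hm : (1 : ℝ) < Fintype.card α := by
    exact_mod_cast Fintype.one_lt_card_iff.mpr ⟨i, j, hij⟩
  have hm₀ : (Fintype.card α : ℝ) ≠ 0 := by positivity
  have hm₁ : (Fintype.card α : ℝ) - 1 ≠ 0 := by linarith
  have hsplit := subsetProb_and_add_subsetProb_and_not (k := k) (i ∈ ·) (j ∈ ·)
  rw [subsetProb_mem i hk, subsetProb_mem_and_mem hij hk] at hsplit
  rw [eq_sub_of_add_eq' hsplit]
  field_simp
  ring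

theorem inv_card_mul_sum_mem_and_mem_div_sq [DecidableEq α] (hij : i ≠ j) (hk₀ : k ≠ 0)
    (hk : k ≤ Fintype.card α) :
    (#((univ : Finset α).powersetCard k) : ℝ)⁻¹ *
        ∑ s ∈ (univ : Finset α).powersetCard k,
          (if i ∈ s ∧ j ∈ s then (1 : ℝ) else 0) / (#s : ℝ) ^ 2 =
      (1 - (k : ℝ)⁻¹) / (Fintype.card α * (Fintype.card α - 1)) := by
  rw [inv_card_mul_sum_ite_div _ (fun n ↦ (n : ℝ) ^ 2), subsetProb_mem_and_mem hij hk]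
  have hk₀' : (k : ℝ) ≠ 0 := by exact_mod_cast hk₀
  field_simp

theorem inv_card_mul_sum_mem_and_not_mem_div [DecidableEq α] (hij : i ≠ j) (hk₀ : k ≠ 0)
    (hk : k < Fintype.card α) :
    (#((univ : Finset α).powersetCard k) : ℝ)⁻¹ *
        ∑ s ∈ (univ : Finset α).powersetCard k,
          (if i ∈ s ∧ j ∉ s then (1 : ℝ) else 0) / ((#s : ℝ) * (Fintype.card α - #s)) =
      1 / (Fintype.card α * (Fintype.card α - 1)) := by
  rw [inv_card_mul_sum_ite_div _ (fun n ↦ (n : ℝ) * (Fintype.card α - n)),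
    subsetProb_mem_and_not_mem hij hk.le]
  have hk' : (Fintype.card α : ℝ) - k ≠ 0 := sub_ne_zero.mpr (by exact_mod_cast hk.ne')
  have hk₀' : (k : ℝ) ≠ 0 := by exact_mod_cast hk₀
  field_simp

end UniformSubset

theorem Nat.four_mul_div_two_mul_add_one_div_two_add_mod_two (m : ℕ) :
    4 * (m / 2) * ((m + 1) / 2) + m % 2 = m ^ 2 := by
  obtain ⟨q, rfl | rfl⟩ := m.even_or_odd'
  · rw [show 2 * q / 2 = q by omega, show (2 * q + 1) / 2 = q by omega,
      show 2 * q % 2 = 0 by omega]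
    ring
  · rw [show (2 * q + 1) / 2 = q by omega, show (2 * q + 1 + 1) / 2 = q + 1 by omega,
      show (2 * q + 1) % 2 = 1 by omega]
    ring

theorem inv_div_two_add_inv_add_one_div_two {m : ℕ} (hm : 2 ≤ m) :
    (2 : ℝ)⁻¹ * ((((m / 2 : ℕ) : ℝ))⁻¹ + (((m + 1) / 2 : ℕ) : ℝ)⁻¹) =
      2 * m / ((m : ℝ) ^ 2 - ((m % 2 : ℕ) : ℝ)) := by
  have hsum : ((m / 2 : ℕ) : ℝ) + (((m + 1) / 2 : ℕ) : ℝ) = m := by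
    exact_mod_cast (by omega : m / 2 + (m + 1) / 2 = m)
  have hprod : (m : ℝ) ^ 2 - ((m % 2 : ℕ) : ℝ) =
      4 * ((m / 2 : ℕ) : ℝ) * (((m + 1) / 2 : ℕ) : ℝ) := by
    rw [sub_eq_iff_eq_add]
    exact_mod_cast (Nat.four_mul_div_two_mul_add_one_div_two_add_mod_two m).symm
  have h₁ : ((m / 2 : ℕ) : ℝ) ≠ 0 := by exact_mod_cast (by omega : m / 2 ≠ 0)
  have h₂ : (((m + 1) / 2 : ℕ) : ℝ) ≠ 0 := by exact_mod_cast (by omega : (m + 1) / 2 ≠ 0)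
  rw [hprod, ← hsum]
  field_simp
  ring

/-- Balanced block randomization in a block of size `m ≥ 2` (number of treated `T` is
`⌊m/2⌋` or `⌈m/2⌉` each with probability `1/2`; given `T`, a uniform subset of size `T`
is treated).  For distinct units `i ≠ j`:
`E[T_i T_j / T²] = 1/(m(m−1)) − 2/((m−1)(m² − o))`,
`E[T_i (1−T_j) / (T(m−T))] = 1/(m(m−1))`, and hence their difference equals
`−2/((m−1)(m² − o))`, where `o = m mod 2`. -/
theorem expectation_pair_treatment (m : ℕ) (hm : 2 ≤ m) (i j : Fin m) (hij : i ≠ j)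
    (E₁ E₂ : ℝ)
    (hE₁ : E₁ =
      (1 / 2 : ℝ) * (((Finset.univ : Finset (Fin m)).powersetCard (m / 2)).card : ℝ)⁻¹ *
          (∑ s ∈ (Finset.univ : Finset (Fin m)).powersetCard (m / 2),
            (if i ∈ s ∧ j ∈ s then (1 : ℝ) else 0) / (s.card : ℝ) ^ 2) +
        (1 / 2 : ℝ) * (((Finset.univ : Finset (Fin m)).powersetCard ((m + 1) / 2)).card : ℝ)⁻¹ *
          (∑ s ∈ (Finset.univ : Finset (Fin m)).powersetCard ((m + 1) / 2),
            (if i ∈ s ∧ j ∈ s then (1 : ℝ) else 0) / (s.card : ℝ) ^ 2))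
    (hE₂ : E₂ =
      (1 / 2 : ℝ) * (((Finset.univ : Finset (Fin m)).powersetCard (m / 2)).card : ℝ)⁻¹ *
          (∑ s ∈ (Finset.univ : Finset (Fin m)).powersetCard (m / 2),
            (if i ∈ s ∧ j ∉ s then (1 : ℝ) else 0) /
              ((s.card : ℝ) * ((m : ℝ) - (s.card : ℝ)))) +
        (1 / 2 : ℝ) * (((Finset.univ : Finset (Fin m)).powersetCard ((m + 1) / 2)).card : ℝ)⁻¹ *
          (∑ s ∈ (Finset.univ : Finset (Fin m)).powersetCard ((m + 1) / 2),
            (if i ∈ s ∧ j ∉ s then (1 : ℝ) else 0) /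
              ((s.card : ℝ) * ((m : ℝ) - (s.card : ℝ))))) :
    E₁ = 1 / ((m : ℝ) * ((m : ℝ) - 1)) -
        2 / (((m : ℝ) - 1) * ((m : ℝ) ^ 2 - ((m % 2 : ℕ) : ℝ))) ∧
      E₂ = 1 / ((m : ℝ) * ((m : ℝ) - 1)) ∧
      E₁ - E₂ = -(2 / (((m : ℝ) - 1) * ((m : ℝ) ^ 2 - ((m % 2 : ℕ) : ℝ)))) := by
  have hk₁ : m / 2 ≠ 0 := by omega
  have hk₂ : (m + 1) / 2 ≠ 0 := by omega
  have hm₀ : (m : ℝ) ≠ 0 := by positivity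
  have hm₁ : (m : ℝ) - 1 ≠ 0 := sub_ne_zero.mpr (by exact_mod_cast (by omega : m ≠ 1))
  have hodd : (m : ℝ) ^ 2 - ((m % 2 : ℕ) : ℝ) ≠ 0 := by
    rw [sub_ne_zero]; exact_mod_cast (by nlinarith [Nat.mod_lt m two_pos] : m ^ 2 ≠ m % 2)
  have hpair := fun k (hk₀ : k ≠ 0) (hk : k < m) ↦
    inv_card_mul_sum_mem_and_mem_div_sq hij hk₀ ((Fintype.card_fin m).symm ▸ hk.le)
  have hmixed := fun k (hk₀ : k ≠ 0) (hk : k < m) ↦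
    inv_card_mul_sum_mem_and_not_mem_div hij hk₀ ((Fintype.card_fin m).symm ▸ hk)
  simp only [Fintype.card_fin] at hpair hmixed
  rw [mul_assoc, mul_assoc, hpair _ hk₁ (by omega), hpair _ hk₂ (by omega)] at hE₁
  rw [mul_assoc, mul_assoc, hmixed _ hk₁ (by omega), hmixed _ hk₂ (by omega)] at hE₂
  have hE₁' : E₁ = 1 / ((m : ℝ) * ((m : ℝ) - 1)) -
      2 / (((m : ℝ) - 1) * ((m : ℝ) ^ 2 - ((m % 2 : ℕ) : ℝ))) := by
    calc E₁ = (1 - (2 : ℝ)⁻¹ * (((m / 2 : ℕ) : ℝ)⁻¹ + (((m + 1) / 2 : ℕ) : ℝ)⁻¹)) /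
          ((m : ℝ) * ((m : ℝ) - 1)) := by rw [hE₁]; ring
      _ = _ := by rw [inv_div_two_add_inv_add_one_div_two hm]; field_simp
  have hE₂' : E₂ = 1 / ((m : ℝ) * ((m : ℝ) - 1)) := by rw [hE₂]; ring
  exact ⟨hE₁', hE₂', by rw [hE₁', hE₂']; ring⟩
end
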